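/- arXiv:1512.05534 — 2 statements merged into one kernel-verified Lean document; each statement's English description precedes it below -/
import Mathlib

section
/- Let γ̂ : (samples) → ℝᵖ satisfy the constraint γ̂ᵀ Ŝ γ̂ = 1 where Ŝ is a symmetric matrix, and suppose √n(Ŝ − I_p) and √n(γ̂ − e_j) are bounded in probability. Then √n(γ̂_j − 1) = −(1/2)√n(Ŝ_{jj} − 1) + o_P(1). -/
set_option linter.unusedSectionVars false


open MeasureTheory Filter Matrix

/-- A sequence of real random variables is bounded in probability. -/
def BoundedInProb {Ω : Type*} [MeasureSpace Ω] (f : ℕ → Ω → ℝ) : Prop :=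
  ∀ ε : ℝ, 0 < ε → ∃ M : ℝ, ∀ n : ℕ,
    ((volume : Measure Ω) {ω | M ≤ |f n ω|}).toReal ≤ ε

section Aux

variable {Ω : Type*} [MeasureSpace Ω] [IsProbabilityMeasure (volume : Measure Ω)]

lemma bip_mono {f g : ℕ → Ω → ℝ} (h : ∀ n ω, |f n ω| ≤ |g n ω|)
    (hg : BoundedInProb g) : BoundedInProb f := by
  intro ε hε
  obtain ⟨M, hM⟩ := hg ε hε
  exact ⟨M, fun n => le_trans (ENNReal.toReal_mono (measure_ne_top _ _)
    (measure_mono fun ω hω => le_trans hω (h n ω))) (hM n)⟩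

lemma bip_const (c : ℝ) : BoundedInProb (fun (_ : ℕ) (_ : Ω) => c) := by
  intro ε hε
  refine ⟨|c| + 1, fun n => ?_⟩
  have h0 : {ω : Ω | |c| + 1 ≤ |(fun (_ : ℕ) (_ : Ω) => c) n ω|} = (∅ : Set Ω) := by
    ext ω
    simp only [Set.mem_setOf_eq, Set.mem_empty_iff_false, iff_false, not_le]
    linarith [abs_nonneg c]
  rw [h0, measure_empty]
  simpa using hε.le

lemma meas_toReal_le_of_subset_union {s t u : Set Ω} {a b : ℝ}
    (hsub : s ⊆ t ∪ u)
    (ht : ((volume : Measure Ω) t).toReal ≤ a)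
    (hu : ((volume : Measure Ω) u).toReal ≤ b) :
    ((volume : Measure Ω) s).toReal ≤ a + b := by
  calc ((volume : Measure Ω) s).toReal
      ≤ ((volume : Measure Ω) (t ∪ u)).toReal :=
        ENNReal.toReal_mono (measure_ne_top _ _) (measure_mono hsub)
    _ ≤ (((volume : Measure Ω) t) + ((volume : Measure Ω) u)).toReal := by
        refine ENNReal.toReal_mono ?_ (measure_union_le _ _)
        exact ENNReal.add_ne_top.2 ⟨measure_ne_top _ _, measure_ne_top _ _⟩
    _ = ((volume : Measure Ω) t).toReal + ((volume : Measure Ω) u).toReal :=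
        ENNReal.toReal_add (measure_ne_top _ _) (measure_ne_top _ _)
    _ ≤ a + b := add_le_add ht hu

lemma bip_add {f g : ℕ → Ω → ℝ} (hf : BoundedInProb f) (hg : BoundedInProb g) :
    BoundedInProb (fun n ω => f n ω + g n ω) := by
  intro ε hε
  obtain ⟨Mf, hMf⟩ := hf (ε/2) (by linarith)
  obtain ⟨Mg, hMg⟩ := hg (ε/2) (by linarith)
  refine ⟨Mf + Mg, fun n => ?_⟩
  have hsub : {ω : Ω | Mf + Mg ≤ |(fun n ω => f n ω + g n ω) n ω|} ⊆
      {ω | Mf ≤ |f n ω|} ∪ {ω | Mg ≤ |g n ω|} := by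
    intro ω hω
    simp only [Set.mem_setOf_eq] at hω
    by_contra hc
    simp only [Set.mem_union, Set.mem_setOf_eq, not_or, not_le] at hc
    have h2 := abs_add_le (f n ω) (g n ω)
    linarith [hc.1, hc.2]
  have := meas_toReal_le_of_subset_union hsub (hMf n) (hMg n)
  linarith

lemma bip_mul {f g : ℕ → Ω → ℝ} (hf : BoundedInProb f) (hg : BoundedInProb g) :
    BoundedInProb (fun n ω => f n ω * g n ω) := by
  intro ε hε
  obtain ⟨Mf, hMf⟩ := hf (ε/2) (by linarith)
  obtain ⟨Mg, hMg⟩ := hg (ε/2) (by linarith)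
  refine ⟨(max Mf 1) * (max Mg 1), fun n => ?_⟩
  have hsub : {ω : Ω | (max Mf 1) * (max Mg 1) ≤ |(fun n ω => f n ω * g n ω) n ω|} ⊆
      {ω | Mf ≤ |f n ω|} ∪ {ω | Mg ≤ |g n ω|} := by
    intro ω hω
    simp only [Set.mem_setOf_eq] at hω
    by_contra hc
    simp only [Set.mem_union, Set.mem_setOf_eq, not_or, not_le] at hc
    have h2 : |f n ω| < max Mf 1 := lt_of_lt_of_le hc.1 (le_max_left _ _)
    have h3 : |g n ω| < max Mg 1 := lt_of_lt_of_le hc.2 (le_max_left _ _)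
    have h4 : |f n ω * g n ω| < (max Mf 1) * (max Mg 1) := by
      rw [abs_mul]
      exact mul_lt_mul'' h2 h3 (abs_nonneg _) (abs_nonneg _)
    linarith
  have := meas_toReal_le_of_subset_union hsub (hMf n) (hMg n)
  linarith

lemma bip_sum {ι : Type*} [DecidableEq ι] (s : Finset ι) (f : ι → ℕ → Ω → ℝ)
    (h : ∀ i ∈ s, BoundedInProb (f i)) :
    BoundedInProb (fun n ω => ∑ i ∈ s, f i n ω) := by
  induction s using Finset.induction_on with
  | empty => simpa using bip_const (Ω := Ω) 0
  | @insert a s ha ih =>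
      have heq : (fun n ω => ∑ i ∈ insert a s, f i n ω)
          = fun n ω => f a n ω + ∑ i ∈ s, f i n ω := by
        funext n ω; rw [Finset.sum_insert ha]
      rw [heq]
      exact bip_add (h a (Finset.mem_insert_self _ _))
        (ih fun i hi => h i (Finset.mem_insert_of_mem hi))

lemma tim_inv_sqrt {K : ℕ → Ω → ℝ} (hK : BoundedInProb K) :
    TendstoInMeasure (volume : Measure Ω)
      (fun (n : ℕ) ω => (1 / Real.sqrt (n : ℝ)) * K n ω) atTop (0 : Ω → ℝ) := by
  rw [tendstoInMeasure_iff_dist]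
  intro ε hε
  rw [ENNReal.tendsto_atTop_zero]
  intro δ hδ
  have hδtop : min δ 1 ≠ ⊤ := (lt_of_le_of_lt (min_le_right _ _) ENNReal.one_lt_top).ne
  have hδ0 : (0:ℝ) < (min δ 1).toReal :=
    ENNReal.toReal_pos (lt_min hδ zero_lt_one).ne' hδtop
  obtain ⟨M, hM⟩ := hK _ hδ0
  set M' : ℝ := max M 1 with hM'def
  have hM'pos : (0:ℝ) < M' := lt_of_lt_of_le one_pos (le_max_right _ _)
  refine ⟨max 1 ⌈(M'/ε)^2⌉₊, fun n hn => ?_⟩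
  have hn1 : 1 ≤ n := le_trans (le_max_left _ _) hn
  have hnR : ((M'/ε)^2 : ℝ) ≤ (n:ℝ) := by
    have h1 : (⌈(M'/ε)^2⌉₊ : ℝ) ≤ (n : ℝ) := by
      exact_mod_cast le_trans (le_max_right 1 _) hn
    exact le_trans (Nat.le_ceil _) h1
  have hnpos : (0:ℝ) < (n:ℝ) := by
    have : (1:ℝ) ≤ (n:ℝ) := by exact_mod_cast hn1
    linarith
  have hs : (0:ℝ) < Real.sqrt (n:ℝ) := Real.sqrt_pos.2 hnpos
  have hsqrt : M'/ε ≤ Real.sqrt (n:ℝ) := by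
    have h2 := Real.sqrt_le_sqrt hnR
    rwa [Real.sqrt_sq (by positivity)] at h2
  have hsub : {ω : Ω | ε ≤ dist ((fun (n : ℕ) ω => (1 / Real.sqrt (n : ℝ)) * K n ω) n ω)
      ((0 : Ω → ℝ) ω)} ⊆ {ω | M ≤ |K n ω|} := by
    intro ω hω
    simp only [Set.mem_setOf_eq, Pi.zero_apply, Real.dist_eq, sub_zero] at hω ⊢
    rw [abs_mul, abs_of_nonneg (by positivity : (0:ℝ) ≤ 1 / Real.sqrt (n:ℝ))] at hω
    have h1 : ε * Real.sqrt (n:ℝ) ≤ |K n ω| := by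
      have h2 : ε * Real.sqrt (n:ℝ) ≤ (1 / Real.sqrt (n:ℝ) * |K n ω|) * Real.sqrt (n:ℝ) :=
        mul_le_mul_of_nonneg_right hω hs.le
      calc ε * Real.sqrt (n:ℝ) ≤ (1 / Real.sqrt (n:ℝ) * |K n ω|) * Real.sqrt (n:ℝ) := h2
        _ = |K n ω| := by field_simp
    have h3 : M' ≤ ε * Real.sqrt (n:ℝ) := by
      have h4 := mul_le_mul_of_nonneg_left hsqrt hε.le
      calc M' = ε * (M'/ε) := by field_simp
        _ ≤ ε * Real.sqrt (n:ℝ) := h4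
    have h5 : M ≤ M' := le_max_left _ _
    linarith
  calc (volume : Measure Ω) {ω | ε ≤ dist ((fun (n : ℕ) ω => (1 / Real.sqrt (n : ℝ)) * K n ω) n ω)
        ((0 : Ω → ℝ) ω)}
      ≤ (volume : Measure Ω) {ω | M ≤ |K n ω|} := measure_mono hsub
    _ ≤ ENNReal.ofReal ((min δ 1).toReal) :=
        (ENNReal.le_ofReal_iff_toReal_le (measure_ne_top _ _) ENNReal.toReal_nonneg).2 (hM n)
    _ = min δ 1 := ENNReal.ofReal_toReal hδtop
    _ ≤ δ := min_le_left _ _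

end Aux

lemma scalar_id {p : ℕ} (j : Fin p) (g : Fin p → ℝ) (Sm : Matrix (Fin p) (Fin p) ℝ)
    (hsym : ∀ l m, Sm l m = Sm m l)
    (hc : ∑ l, ∑ m, g l * (Sm l m * g m) = 1) :
    (g j - 1) + (Sm j j - 1) / 2 =
      -(1/2) * ((∑ l, (g l - if l = j then 1 else 0) * (g l - if l = j then 1 else 0))
        + 2 * (∑ l, (Sm j l - if j = l then 1 else 0) * (g l - if l = j then 1 else 0))
        + ∑ l, ∑ m, (g l - if l = j then 1 else 0) * (Sm l m - if l = m then 1 else 0)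
            * (g m - if m = j then 1 else 0)) := by
  classical
  have expand : ∀ l m : Fin p, g l * (Sm l m * g m) =
      (g l - if l = j then 1 else 0) * (Sm l m - if l = m then 1 else 0)
          * (g m - if m = j then 1 else 0)
      + (if m = j then (g l - if l = j then 1 else 0) * (Sm l m - if l = m then 1 else 0) else 0)
      + (if l = j then (Sm l m - if l = m then 1 else 0) * (g m - if m = j then 1 else 0) else 0)
      + (if l = j then (if m = j then (Sm l m - if l = m then 1 else 0) else 0) else 0)
      + (if l = m then (g l - if l = j then 1 else 0) * (g m - if m = j then 1 else 0) else 0)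
      + (if l = m then (if m = j then (g l - if l = j then 1 else 0) else 0) else 0)
      + (if l = m then (if l = j then (g m - if m = j then 1 else 0) else 0) else 0)
      + (if l = m then (if l = j then (1:ℝ) else 0) else 0) := by
    intro l m
    by_cases h1 : l = j <;> by_cases h2 : m = j <;> by_cases h3 : l = m <;> subst_vars <;>
      simp_all <;> ring
  have key : ∑ l, ∑ m, g l * (Sm l m * g m)
      = (∑ l, ∑ m, (g l - if l = j then 1 else 0) * (Sm l m - if l = m then 1 else 0)
            * (g m - if m = j then 1 else 0))
        + (∑ l, (g l - if l = j then 1 else 0) * (Sm l j - if l = j then 1 else 0))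
        + (∑ m, (Sm j m - if j = m then 1 else 0) * (g m - if m = j then 1 else 0))
        + (Sm j j - 1)
        + (∑ l, (g l - if l = j then 1 else 0) * (g l - if l = j then 1 else 0))
        + (g j - 1) + (g j - 1) + 1 := by
    simp only [expand, Finset.sum_add_distrib, Finset.sum_ite_irrel, Finset.sum_ite_eq,
      Finset.sum_ite_eq', Finset.mem_univ, if_true, Finset.sum_const_zero]
    try ring
  have hsymsum : ∑ l, (g l - if l = j then 1 else 0) * (Sm l j - if l = j then 1 else 0)
      = ∑ l, (Sm j l - if j = l then 1 else 0) * (g l - if l = j then 1 else 0) := by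
    refine Finset.sum_congr rfl fun l _ => ?_
    have h1 : Sm l j = Sm j l := hsym l j
    have h2 : (if l = j then (1:ℝ) else 0) = (if j = l then (1:ℝ) else 0) := by
      by_cases h : l = j
      · simp [h]
      · simp [h, Ne.symm h]
    rw [h1, h2]; ring
  rw [key, hsymsum] at hc
  linarith

/-- Lemma 1 (first part): if `γ̂ᵀ Ŝ γ̂ = 1` with `Ŝ` symmetric, and
`√n(Ŝ − I)` and `√n(γ̂ − e_j)` are bounded in probability, then
`√n(γ̂_j − 1) = −(1/2)√n(Ŝ_{jj} − 1) + o_P(1)`. -/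
theorem diagonal_expansion
    {Ω : Type*} [MeasureSpace Ω] [IsProbabilityMeasure (volume : Measure Ω)]
    {p : ℕ} (j : Fin p)
    (S : ℕ → Ω → Matrix (Fin p) (Fin p) ℝ) (γ : ℕ → Ω → (Fin p → ℝ))
    (hSsym : ∀ n ω, (S n ω).IsSymm)
    (hconstr : ∀ n ω, γ n ω ⬝ᵥ (S n ω).mulVec (γ n ω) = 1)
    (hbS : ∀ i l : Fin p, BoundedInProb
      (fun (n : ℕ) ω => Real.sqrt (n : ℝ) * (S n ω i l - (1 : Matrix (Fin p) (Fin p) ℝ) i l)))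
    (hbγ : ∀ i : Fin p, BoundedInProb
      (fun (n : ℕ) ω => Real.sqrt (n : ℝ) * (γ n ω i - if i = j then 1 else 0))) :
    TendstoInMeasure (volume : Measure Ω)
      (fun (n : ℕ) ω => Real.sqrt (n : ℝ) * (γ n ω j - 1)
        + (1 / 2) * (Real.sqrt (n : ℝ) * (S n ω j j - 1))) atTop 0 := by
  classical
  have hbS' : ∀ i l : Fin p, BoundedInProb
      (fun (n : ℕ) ω => Real.sqrt (n : ℝ) * (S n ω i l - if i = l then 1 else 0)) := by
    intro i l
    have := hbS i l
    simpa [Matrix.one_apply] using this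
  set K : ℕ → Ω → ℝ := fun n ω =>
    -(1/2) * ((∑ l, (Real.sqrt (n:ℝ) * (γ n ω l - if l = j then 1 else 0))
          * (Real.sqrt (n:ℝ) * (γ n ω l - if l = j then 1 else 0)))
      + 2 * (∑ l, (Real.sqrt (n:ℝ) * (S n ω j l - if j = l then 1 else 0))
          * (Real.sqrt (n:ℝ) * (γ n ω l - if l = j then 1 else 0)))
      + (1 / Real.sqrt (n:ℝ)) * ∑ l, ∑ m,
          (Real.sqrt (n:ℝ) * (γ n ω l - if l = j then 1 else 0))
          * (Real.sqrt (n:ℝ) * (S n ω l m - if l = m then 1 else 0))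
          * (Real.sqrt (n:ℝ) * (γ n ω m - if m = j then 1 else 0))) with hKdef
  have habs : ∀ (T : ℕ → Ω → ℝ) (n : ℕ) (ω : Ω),
      |(1 / Real.sqrt (n:ℝ)) * T n ω| ≤ |T n ω| := by
    intro T n ω
    rw [abs_mul]
    have h1 : |1 / Real.sqrt (n:ℝ)| ≤ 1 := by
      rw [abs_of_nonneg (by positivity)]
      rcases Nat.eq_zero_or_pos n with h | h
      · simp [h]
      · have h2 : (1:ℝ) ≤ Real.sqrt (n:ℝ) := by
          rw [show (1:ℝ) = Real.sqrt 1 from Real.sqrt_one.symm]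
          exact Real.sqrt_le_sqrt (by exact_mod_cast h)
        rw [div_le_one (by linarith)]
        exact h2
    calc |1 / Real.sqrt (n:ℝ)| * |T n ω| ≤ 1 * |T n ω| :=
          mul_le_mul_of_nonneg_right h1 (abs_nonneg _)
      _ = |T n ω| := one_mul _
  have hKb : BoundedInProb K := by
    rw [hKdef]
    refine bip_mul (bip_const _) (bip_add (bip_add ?_ ?_) ?_)
    · exact bip_sum Finset.univ _ (fun l _ => bip_mul (hbγ l) (hbγ l))
    · exact bip_mul (bip_const 2) (bip_sum Finset.univ _ (fun l _ => bip_mul (hbS' j l) (hbγ l)))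
    · have hT3 : BoundedInProb (fun (n : ℕ) (ω : Ω) => ∑ l, ∑ m,
          (Real.sqrt (n:ℝ) * (γ n ω l - if l = j then 1 else 0))
          * (Real.sqrt (n:ℝ) * (S n ω l m - if l = m then 1 else 0))
          * (Real.sqrt (n:ℝ) * (γ n ω m - if m = j then 1 else 0))) :=
        bip_sum Finset.univ _ (fun l _ => bip_sum Finset.univ _
          (fun m _ => bip_mul (bip_mul (hbγ l) (hbS' l m)) (hbγ m)))
      exact bip_mono (fun n ω => habs (fun (n : ℕ) (ω : Ω) => ∑ l, ∑ m,
          (Real.sqrt (n:ℝ) * (γ n ω l - if l = j then 1 else 0))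
          * (Real.sqrt (n:ℝ) * (S n ω l m - if l = m then 1 else 0))
          * (Real.sqrt (n:ℝ) * (γ n ω m - if m = j then 1 else 0))) n ω) hT3
  have hEqfun : (fun (n : ℕ) ω => Real.sqrt (n : ℝ) * (γ n ω j - 1)
        + (1 / 2) * (Real.sqrt (n : ℝ) * (S n ω j j - 1)))
      = fun (n : ℕ) ω => (1 / Real.sqrt (n : ℝ)) * K n ω := by
    funext n ω
    rcases eq_or_ne n 0 with rfl | hn
    · simp [hKdef]
    · have hnpos : (0:ℝ) < (n:ℝ) := by exact_mod_cast Nat.pos_of_ne_zero hn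
      have hs : (0:ℝ) < Real.sqrt (n:ℝ) := Real.sqrt_pos.2 hnpos
      have hc' : ∑ l, ∑ m, γ n ω l * (S n ω l m * γ n ω m) = 1 := by
        have := hconstr n ω
        simpa [dotProduct, mulVec, Finset.mul_sum] using this
      have hid := scalar_id j (γ n ω) (S n ω) (fun l m => (hSsym n ω).apply m l) hc'
      simp only [hKdef]
      have e1 : ∑ l, (Real.sqrt (n:ℝ) * (γ n ω l - if l = j then 1 else 0))
            * (Real.sqrt (n:ℝ) * (γ n ω l - if l = j then 1 else 0))
          = Real.sqrt (n:ℝ) * Real.sqrt (n:ℝ)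
            * ∑ l, (γ n ω l - if l = j then 1 else 0) * (γ n ω l - if l = j then 1 else 0) := by
        rw [Finset.mul_sum]; exact Finset.sum_congr rfl fun l _ => by ring
      have e2 : ∑ l, (Real.sqrt (n:ℝ) * (S n ω j l - if j = l then 1 else 0))
            * (Real.sqrt (n:ℝ) * (γ n ω l - if l = j then 1 else 0))
          = Real.sqrt (n:ℝ) * Real.sqrt (n:ℝ)
            * ∑ l, (S n ω j l - if j = l then 1 else 0) * (γ n ω l - if l = j then 1 else 0) := by
        rw [Finset.mul_sum]; exact Finset.sum_congr rfl fun l _ => by ring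
      have e3 : ∑ l, ∑ m, (Real.sqrt (n:ℝ) * (γ n ω l - if l = j then 1 else 0))
            * (Real.sqrt (n:ℝ) * (S n ω l m - if l = m then 1 else 0))
            * (Real.sqrt (n:ℝ) * (γ n ω m - if m = j then 1 else 0))
          = Real.sqrt (n:ℝ) * Real.sqrt (n:ℝ) * Real.sqrt (n:ℝ)
            * ∑ l, ∑ m, (γ n ω l - if l = j then 1 else 0)
              * (S n ω l m - if l = m then 1 else 0) * (γ n ω m - if m = j then 1 else 0) := by
        rw [Finset.mul_sum]
        refine Finset.sum_congr rfl fun l _ => ?_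
        rw [Finset.mul_sum]
        exact Finset.sum_congr rfl fun m _ => by ring
      rw [e1, e2, e3]
      set s : ℝ := Real.sqrt (n:ℝ) with hsdef
      set X1 : ℝ := ∑ l, (γ n ω l - if l = j then 1 else 0) * (γ n ω l - if l = j then 1 else 0)
        with hX1
      set X2 : ℝ := ∑ l, (S n ω j l - if j = l then 1 else 0) * (γ n ω l - if l = j then 1 else 0)
        with hX2
      set X3 : ℝ := ∑ l, ∑ m, (γ n ω l - if l = j then 1 else 0)
        * (S n ω l m - if l = m then 1 else 0) * (γ n ω m - if m = j then 1 else 0) with hX3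
      have hs' : s ≠ 0 := ne_of_gt hs
      calc s * (γ n ω j - 1) + 1/2 * (s * (S n ω j j - 1))
          = s * ((γ n ω j - 1) + (S n ω j j - 1) / 2) := by ring
        _ = s * (-(1/2) * (X1 + 2 * X2 + X3)) := by rw [hid]
        _ = 1 / s * (-(1/2) * (s * s * X1 + 2 * (s * s * X2) + 1 / s * (s * s * s * X3))) := by
            field_simp
  rw [hEqfun]
  exact tim_inv_sqrt hKb
end

section
/- Suppose T : ℝᵖ → ℝᵖ and u₁,…,u_p ∈ ℝᵖ are orthonormal and satisfy the fixed-point condition of the symmetric FastICA algorithm: U = (T Tᵀ)^{-1/2} T where T is the p×p matrix with rows T(u₁)ᵀ,…,T(u_p)ᵀ and U has rows u₁ᵀ,…,u_pᵀ, and T Tᵀ is positive definite. Then U is orthogonal, and moreover U Tᵀ = (T Tᵀ)^{1/2} is symmetric positive definite, which implies u_lᵀ T(u_j) = u_jᵀ T(u_l) for all j, l. -/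
open Matrix

/-- Fixed points of the symmetric FastICA orthogonalization: if the rows `u_j`
are orthonormal and `U = (T Tᵀ)^{-1/2} T` (where `T` has rows `T(u_j)ᵀ` and
`T Tᵀ` is positive definite), then `U` is orthogonal, `U Tᵀ` is the symmetric
positive definite square root of `T Tᵀ`, and hence
`u_lᵀ T(u_j) = u_jᵀ T(u_l)` for all `j, l`. -/
theorem symmetric_fastica_fixed_point {p : ℕ}
    (T : (Fin p → ℝ) → (Fin p → ℝ)) (u : Fin p → (Fin p → ℝ))
    (hu : ∀ j l : Fin p, u j ⬝ᵥ u l = if j = l then 1 else 0)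
    (Tm : Matrix (Fin p) (Fin p) ℝ) (hTm : Tm = Matrix.of fun j i => T (u j) i)
    (hpd : (Tm * Tmᵀ).PosDef)
    (R : Matrix (Fin p) (Fin p) ℝ) (hRpd : R.PosDef)
    (hRsq : R * R = (Tm * Tmᵀ)⁻¹)
    (U : Matrix (Fin p) (Fin p) ℝ) (hU : U = Matrix.of fun j i => u j i)
    (hfix : U = R * Tm) :
    U * Uᵀ = 1 ∧ (U * Tmᵀ).IsSymm ∧ (U * Tmᵀ).PosDef ∧
    (U * Tmᵀ) * (U * Tmᵀ) = Tm * Tmᵀ ∧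
    (∀ j l : Fin p, u l ⬝ᵥ T (u j) = u j ⬝ᵥ T (u l)) := by
  have hRdet : IsUnit R.det := isUnit_iff_ne_zero.mpr (ne_of_gt hRpd.det_pos)
  have hAdet : IsUnit (Tm * Tmᵀ).det := isUnit_iff_ne_zero.mpr (ne_of_gt hpd.det_pos)
  -- A = R⁻¹ * R⁻¹
  have hA : Tm * Tmᵀ = R⁻¹ * R⁻¹ := by
    have h1 : ((Tm * Tmᵀ)⁻¹)⁻¹ = Tm * Tmᵀ := Matrix.nonsing_inv_nonsing_inv _ hAdet
    rw [← h1, ← hRsq, Matrix.mul_inv_rev]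
  have hUT : U * Tmᵀ = R⁻¹ := by
    rw [hfix, Matrix.mul_assoc, hA, ← Matrix.mul_assoc,
      Matrix.mul_nonsing_inv _ hRdet, Matrix.one_mul]
  have hRipd : (R⁻¹).PosDef := hRpd.inv
  have hsymm : (U * Tmᵀ).IsSymm := by
    rw [hUT]
    exact hRipd.isHermitian
  refine ⟨?_, hsymm, hUT ▸ hRipd, ?_, ?_⟩
  · ext j l
    simp only [Matrix.mul_apply, Matrix.one_apply, hU, Matrix.transpose_apply, Matrix.of_apply]
    simpa [dotProduct] using hu j l
  · rw [hUT, hA]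
  · intro j l
    have h := congrFun (congrFun hsymm.eq l) j
    simp only [Matrix.transpose_apply, Matrix.mul_apply, hU, hTm, Matrix.transpose_apply,
      Matrix.of_apply] at h
    simpa [dotProduct] using h.symm
end
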